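/- For every integer n ≥ 1 and every integer k with 1 ≤ k ≤ n, the number of type-B permutation tableaux of size n whose k-th border step is a south step equals ((n-k+1)/(2n))·|B_n|; equivalently, for a uniformly random type-B permutation tableau of size n, the probability that the k-th step is a south step is (1/2)·(1-(k-1)/n). -/

import Mathlib

/-!
Deleting the last border step of a tableau of size `n + 1` leaves a tableau of size `n`.
Conversely a tableau `T` of size `n` is extended either by a south step, which adds a free bottom
row, or by a west step, which adds a leftmost column and its diagonal row on top of the diagram.
The `1`s of that column form any nonempty set `B` of rows that are free in `T` (they may receive
a `1` in a new leftmost column) or equal to the new diagonal row, and the free rows of the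
extension are `B` and the old free rows lying above all of `B`. Summing over `B` shows that the
extensions of a tableau with `u` free rows contribute `2x(1+x)^u` to `∑ x^(free rows)`, so that
`G_{n+1}(x) = 2x G_n(x+1)` for `G_n(x) = ∑_{T ∈ B_n} x^{u(T)}`. The same recursion holds for the
sum `H_n` over the tableaux whose `k`-th step is south as long as `n ≥ k`, while `H_k = x G_{k-1}`.
Together with `(x + n) G_n(x) = x G_n(x + 1)` this gives `2(x + n - 1) H_n(x) = (x + n - k) G_n(x)`,
and `x = 1` is the claim.
-/

/-- A type-B permutation tableau of size `n`, encoded via its border steps and filling.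

Border steps are indexed by `Fin n` (index `i` is the `(i+1)`-th step from the
northeast corner); `west i = true` means the `(i+1)`-th step is a west step
(giving a column) and `west i = false` means it is a south step (giving a row
of the original, unshifted diagram).

Rows of the shifted diagram are also indexed by `Fin n`: a south step `r` indexes
the corresponding original row, and a west step `r` indexes the inserted diagonal
row whose diagonal cell lies in the column of `r`.  The cell in row `r` and the
column of a west step `c` exists iff (`r` is south and `r < c`) or (`r` is west
and `r ≤ c`); in particular the diagonal cell of the column of `c` is `(c, c)`.
Columns are ordered left-to-right by decreasing step index, rows top-to-bottom as:
diagonal rows by decreasing step index, then original rows by increasing step index.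

`filling r c = true` means the cell `(r, c)` contains a 1; `filling` is `false`
outside the cells of the diagram (field `support`).  The fields `col_one`,
`no_bad_zero` and `diag_zero` are the three defining conditions of a type-B
permutation tableau. -/
structure TypeBTableau (n : ℕ) where
  west : Fin n → Bool
  filling : Fin n → Fin n → Bool
  support : ∀ r c : Fin n, filling r c = true →
    west c = true ∧ ((west r = false ∧ (r : ℕ) < (c : ℕ)) ∨ (west r = true ∧ (r : ℕ) ≤ (c : ℕ)))
  col_one : ∀ c : Fin n, west c = true → ∃ r : Fin n, filling r c = true
  no_bad_zero : ∀ r c : Fin n,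
    (west c = true ∧ ((west r = false ∧ (r : ℕ) < (c : ℕ)) ∨ (west r = true ∧ (r : ℕ) ≤ (c : ℕ)))) →
    filling r c = false →
    ¬((∃ r' : Fin n,
        ((west r' = true ∧ west r = false) ∨
         (west r' = true ∧ west r = true ∧ (r : ℕ) < (r' : ℕ)) ∨
         (west r' = false ∧ west r = false ∧ (r' : ℕ) < (r : ℕ))) ∧
        filling r' c = true) ∧
      (∃ c' : Fin n, (c : ℕ) < (c' : ℕ) ∧ filling r c' = true))
  diag_zero : ∀ j : Fin n, west j = true → filling j j = false →
    ∀ c : Fin n, filling j c = false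

namespace TypeBTableau

noncomputable instance instFintype {n : ℕ} : Fintype (TypeBTableau n) :=
  Fintype.ofInjective (fun T => (T.west, T.filling)) (by
    rintro ⟨w1, f1, _, _, _, _⟩ ⟨w2, f2, _, _, _, _⟩ h
    simp only [Prod.mk.injEq] at h
    obtain ⟨h1, h2⟩ := h
    subst h1; subst h2; rfl)

end TypeBTableau

open Finset

section PowersetSums

variable {α R : Type*} [CommSemiring R]

theorem Finset.sum_powerset_pow_card_succ (x : R) (s : Finset α) :
    ∑ B ∈ s.powerset, x ^ (#B + 1) = x * (1 + x) ^ #s := by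
  rw [add_comm 1 x, ← sum_pow_mul_eq_add_pow x 1 s, mul_sum]
  simp [pow_succ']

variable [DecidableEq α]

theorem Finset.sum_powerset_insert_filter_nonempty {a : α} {s : Finset α} (ha : a ∉ s)
    (g : Finset α → R) :
    ∑ B ∈ (insert a s).powerset with B.Nonempty, g B =
      ∑ B ∈ s.powerset with B.Nonempty, g B + ∑ B ∈ s.powerset, g (insert a B) := by
  simp only [sum_filter, sum_powerset_insert ha, insert_nonempty, if_true]

variable {β : Type*} [LinearOrder β]

theorem Finset.pow_card_succ_add_sum_powerset_pow_card_add_card_lt (f : α → β) (x : R)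
    {s : Finset α} (hf : Set.InjOn f s) :
    x ^ (#s + 1) + ∑ B ∈ s.powerset with B.Nonempty, x ^ (#B + #{a ∈ s | ∀ b ∈ B, f a < f b}) =
      x * (1 + x) ^ #s := by
  induction s using Finset.induction_on_min_value f with
  | empty => simp [filter_singleton]
  | insert a s ha hmin ih =>
    have hlt : ∀ c ∈ s, f a < f c := fun c hc =>
      (hmin c hc).lt_of_ne fun h => ha (hf (mem_insert_self a s) (mem_insert_of_mem hc) h ▸ hc)
    have hold : ∀ B ∈ {B ∈ s.powerset | B.Nonempty},
        x ^ (#B + #{c ∈ insert a s | ∀ b ∈ B, f c < f b}) =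
          x * x ^ (#B + #{c ∈ s | ∀ b ∈ B, f c < f b}) := by
      intro B hB
      obtain ⟨hBs, -⟩ := mem_filter.mp hB
      rw [filter_insert, if_pos fun b hb => hlt b (mem_powerset.mp hBs hb),
        card_insert_of_notMem fun h => ha (mem_filter.mp h).1]
      ring
    have hnew : ∀ B ∈ s.powerset,
        x ^ (#(insert a B) + #{c ∈ insert a s | ∀ b ∈ insert a B, f c < f b}) = x ^ (#B + 1) := by
      intro B hB
      rw [card_insert_of_notMem fun h => ha (mem_powerset.mp hB h), filter_eq_empty_iff.mpr]
      · simp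
      · intro c hc hall
        rcases mem_insert.mp hc with rfl | hc
        · exact lt_irrefl _ (hall c (mem_insert_self c B))
        · exact (hlt c hc).asymm (hall a (mem_insert_self a B))
    rw [sum_powerset_insert_filter_nonempty ha, sum_congr rfl hold, sum_congr rfl hnew,
      sum_powerset_pow_card_succ, card_insert_of_notMem ha, ← mul_sum]
    calc _ = x * (x ^ (#s + 1) + ∑ B ∈ s.powerset with B.Nonempty,
          x ^ (#B + #{c ∈ s | ∀ b ∈ B, f c < f b})) + x * (1 + x) ^ #s := by ring
      _ = _ := by rw [ih (hf.mono (coe_subset.mpr (subset_insert a s)))]; ring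

end PowersetSums

namespace TypeBTableau

variable {n : ℕ}

def RowAbove (w : Fin n → Bool) (r' r : Fin n) : Prop :=
  (w r' = true ∧ w r = false) ∨ (w r' = true ∧ w r = true ∧ (r : ℕ) < (r' : ℕ)) ∨
    (w r' = false ∧ w r = false ∧ (r' : ℕ) < (r : ℕ))

instance (w : Fin n → Bool) (r' r : Fin n) : Decidable (RowAbove w r' r) := by
  unfold RowAbove; infer_instance

/-- Rows of the shifted diagram numbered from the top. -/
def rowPos (w : Fin n → Bool) (r : Fin n) : ℕ :=
  if w r then n - 1 - r else n + r

theorem rowAbove_iff_rowPos_lt {w : Fin n → Bool} {r' r : Fin n} :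
    RowAbove w r' r ↔ rowPos w r' < rowPos w r := by
  have := r'.isLt
  have := r.isLt
  unfold RowAbove rowPos
  cases w r' <;> cases w r <;> simp <;> omega

theorem rowPos_injective (w : Fin n → Bool) : Function.Injective (rowPos w) := by
  intro a b hab
  have := a.isLt
  have := b.isLt
  unfold rowPos at hab
  ext
  cases ha : w a <;> cases hb : w b <;> simp only [ha, hb] at hab <;> simp at hab <;> omega

def HasCell (w : Fin n → Bool) (r c : Fin n) : Prop :=
  w c = true ∧ ((w r = false ∧ (r : ℕ) < (c : ℕ)) ∨ (w r = true ∧ (r : ℕ) ≤ (c : ℕ)))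

instance (w : Fin n → Bool) (r c : Fin n) : Decidable (HasCell w r c) := by
  unfold HasCell; infer_instance

theorem rowAbove_irrefl (w : Fin n → Bool) (r : Fin n) : ¬ RowAbove w r r := by
  simp [rowAbove_iff_rowPos_lt]

theorem RowAbove.asymm {w : Fin n → Bool} {a b : Fin n} (h : RowAbove w a b) :
    ¬ RowAbove w b a := by
  rw [rowAbove_iff_rowPos_lt] at h ⊢; omega

theorem rowAbove_or_rowAbove_of_ne (w : Fin n → Bool) {a b : Fin n} (h : a ≠ b) :
    RowAbove w a b ∨ RowAbove w b a := by
  simp only [rowAbove_iff_rowPos_lt]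
  exact lt_or_gt_of_ne ((rowPos_injective w).ne h)

theorem not_rowAbove_last {w : Fin (n + 1) → Bool} (h : w (Fin.last n) = true) (r : Fin (n + 1)) :
    ¬ RowAbove w r (Fin.last n) := by
  simp [rowAbove_iff_rowPos_lt, rowPos, h]

theorem rowAbove_castSucc {w : Fin (n + 1) → Bool} {a b : Fin n} :
    RowAbove w a.castSucc b.castSucc ↔ RowAbove (Fin.init w) a b := Iff.rfl

theorem hasCell_castSucc {w : Fin (n + 1) → Bool} {a b : Fin n} :
    HasCell w a.castSucc b.castSucc ↔ HasCell (Fin.init w) a b := Iff.rfl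

theorem hasCell_last {w : Fin (n + 1) → Bool} {r : Fin (n + 1)} :
    HasCell w r (Fin.last n) ↔ w (Fin.last n) = true := by
  refine ⟨And.left, fun h => ⟨h, ?_⟩⟩
  cases r using Fin.lastCases with
  | last => exact .inr ⟨h, le_rfl⟩
  | cast r => cases w r.castSucc <;> simp

theorem not_hasCell_last_castSucc {w : Fin (n + 1) → Bool} {c : Fin n} :
    ¬ HasCell w (Fin.last n) c.castSucc := by
  rintro ⟨-, ⟨-, h⟩ | ⟨-, h⟩⟩ <;> simp at h <;> omega

def Restricted (T : TypeBTableau n) (r : Fin n) : Prop :=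
  ∃ c, HasCell T.west r c ∧ T.filling r c = false ∧
    ∃ r', RowAbove T.west r' r ∧ T.filling r' c = true

instance (T : TypeBTableau n) (r : Fin n) : Decidable (T.Restricted r) := by
  unfold Restricted; infer_instance

/-- The rows that may receive a `1` in a new leftmost column. -/
def IsFree (T : TypeBTableau n) (r : Fin n) : Prop :=
  (T.west r = true → T.filling r r = true) ∧ ¬ T.Restricted r

instance (T : TypeBTableau n) (r : Fin n) : Decidable (T.IsFree r) := by
  unfold IsFree; infer_instance

def freeRows (T : TypeBTableau n) : Finset (Fin n) := {r | T.IsFree r}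

@[simp] theorem mem_freeRows {T : TypeBTableau n} {r : Fin n} : r ∈ T.freeRows ↔ T.IsFree r := by
  simp [freeRows]

theorem ext_west_filling {T₁ T₂ : TypeBTableau n} (hw : T₁.west = T₂.west)
    (hf : T₁.filling = T₂.filling) : T₁ = T₂ := by
  cases T₁; cases T₂; cases hw; cases hf; rfl

instance : DecidableEq (TypeBTableau n) := fun T₁ T₂ =>
  decidable_of_iff (T₁.west = T₂.west ∧ T₁.filling = T₂.filling)
    ⟨fun h => ext_west_filling h.1 h.2, fun h => h ▸ ⟨rfl, rfl⟩⟩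

theorem filling_last_castSucc (T : TypeBTableau (n + 1)) (c : Fin n) :
    T.filling (Fin.last n) c.castSucc = false :=
  Bool.eq_false_iff.mpr fun h => not_hasCell_last_castSucc (T.support _ _ h)

def init (T : TypeBTableau (n + 1)) : TypeBTableau n where
  west := Fin.init T.west
  filling r c := T.filling r.castSucc c.castSucc
  support r c h := T.support r.castSucc c.castSucc h
  col_one c hc := by
    obtain ⟨r, hr⟩ := T.col_one c.castSucc hc
    cases r using Fin.lastCases with
    | last => simp [filling_last_castSucc] at hr
    | cast r => exact ⟨r, hr⟩
  no_bad_zero r c hcell h0 := fun ⟨⟨r', habv, h1⟩, c', hlt, h2⟩ =>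
    T.no_bad_zero r.castSucc c.castSucc hcell h0 ⟨⟨r'.castSucc, habv, h1⟩, c'.castSucc, hlt, h2⟩
  diag_zero j hj h0 c := T.diag_zero j.castSucc hj h0 c.castSucc

@[simp] theorem init_west (T : TypeBTableau (n + 1)) : T.init.west = Fin.init T.west := rfl

@[simp] theorem init_filling (T : TypeBTableau (n + 1)) (r c : Fin n) :
    T.init.filling r c = T.filling r.castSucc c.castSucc := rfl

def lastColumn (T : TypeBTableau (n + 1)) : Finset (Fin (n + 1)) :=
  {r | T.filling r (Fin.last n) = true}

@[simp] theorem mem_lastColumn {T : TypeBTableau (n + 1)} {r : Fin (n + 1)} :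
    r ∈ T.lastColumn ↔ T.filling r (Fin.last n) = true := by
  simp [lastColumn]

theorem ext_of_init {T₁ T₂ : TypeBTableau (n + 1)} (h : T₁.init = T₂.init)
    (hw : T₁.west (Fin.last n) = T₂.west (Fin.last n)) (hc : T₁.lastColumn = T₂.lastColumn) :
    T₁ = T₂ := by
  refine ext_west_filling (funext fun r => ?_) (funext₂ fun r c => ?_)
  · cases r using Fin.lastCases with
    | last => exact hw
    | cast r => exact congrFun (congrArg west h) r
  · cases c using Fin.lastCases with
    | last => exact Bool.eq_iff_iff.mpr (by simpa using Finset.ext_iff.mp hc r)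
    | cast c =>
      cases r using Fin.lastCases with
      | last => rw [filling_last_castSucc, filling_last_castSucc]
      | cast r => exact congrFun₂ (congrArg filling h) r c

theorem lastColumn_eq_empty {T : TypeBTableau (n + 1)} (h : T.west (Fin.last n) = false) :
    T.lastColumn = ∅ :=
  Finset.eq_empty_of_forall_notMem fun r hr => by
    simpa [h] using (T.support _ _ (mem_lastColumn.mp hr)).1

theorem lastColumn_nonempty {T : TypeBTableau (n + 1)} (h : T.west (Fin.last n) = true) :
    T.lastColumn.Nonempty := by
  obtain ⟨r, hr⟩ := T.col_one _ h
  exact ⟨r, mem_lastColumn.mpr hr⟩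

theorem not_restricted_last (T : TypeBTableau (n + 1)) : ¬ T.Restricted (Fin.last n) := by
  rintro ⟨c, hcell, -, r', habv, -⟩
  cases c using Fin.lastCases with
  | last => exact not_rowAbove_last (hasCell_last.mp hcell) r' habv
  | cast c => exact not_hasCell_last_castSucc hcell

theorem isFree_last_iff {T : TypeBTableau (n + 1)} :
    T.IsFree (Fin.last n) ↔ (T.west (Fin.last n) = true → Fin.last n ∈ T.lastColumn) := by
  simp [IsFree, not_restricted_last]

theorem restricted_castSucc_iff {T : TypeBTableau (n + 1)} {r : Fin n} :
    T.Restricted r.castSucc ↔ T.init.Restricted r ∨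
      (r.castSucc ∉ T.lastColumn ∧ ∃ b ∈ T.lastColumn, RowAbove T.west b r.castSucc) := by
  constructor
  · rintro ⟨c, hcell, h0, r', habv, h1⟩
    cases c using Fin.lastCases with
    | last => exact .inr ⟨by simpa using h0, r', mem_lastColumn.mpr h1, habv⟩
    | cast c =>
      cases r' using Fin.lastCases with
      | last => simp [filling_last_castSucc] at h1
      | cast r' => exact .inl ⟨c, hcell, h0, r', habv, h1⟩
  · rintro (⟨c, hcell, h0, r', habv, h1⟩ | ⟨hr, b, hb, habv⟩)
    · exact ⟨c.castSucc, hcell, h0, r'.castSucc, habv, h1⟩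
    · exact ⟨Fin.last n, hasCell_last.mpr (T.support _ _ (mem_lastColumn.mp hb)).1,
        by simpa using hr, b, habv, mem_lastColumn.mp hb⟩

theorem isFree_castSucc_iff {T : TypeBTableau (n + 1)} {r : Fin n} :
    T.IsFree r.castSucc ↔ T.init.IsFree r ∧
      (r.castSucc ∈ T.lastColumn ∨ ∀ b ∈ T.lastColumn, ¬ RowAbove T.west b r.castSucc) := by
  simp only [IsFree, restricted_castSucc_iff, not_or, and_assoc]
  refine and_congr Iff.rfl (and_congr Iff.rfl ?_)
  push Not
  exact or_iff_not_imp_left.symm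

/-- The last column lies to the left of all other cells, so the condition on zeros and the
diagonal condition force its `1`s into free rows. -/
theorem isFree_init_of_castSucc_mem_lastColumn {T : TypeBTableau (n + 1)} {r : Fin n}
    (h : r.castSucc ∈ T.lastColumn) : T.init.IsFree r := by
  rw [mem_lastColumn] at h
  refine ⟨fun hw => ?_, fun ⟨c, hcell, h0, r', habv, h1⟩ => ?_⟩
  · by_contra hdiag
    simp [T.diag_zero r.castSucc hw (by simpa using hdiag)] at h
  · exact T.no_bad_zero r.castSucc c.castSucc hcell h0
      ⟨⟨r'.castSucc, habv, h1⟩, Fin.last n, c.castSucc_lt_last, h⟩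

theorem lastColumn_subset (T : TypeBTableau (n + 1)) :
    T.lastColumn ⊆ insert (Fin.last n) (T.init.freeRows.map Fin.castSuccEmb) := by
  intro r hr
  cases r using Fin.lastCases with
  | last => exact mem_insert_self _ _
  | cast r =>
    exact mem_insert_of_mem (mem_map_of_mem _ (mem_freeRows.mpr
      (isFree_init_of_castSucc_mem_lastColumn hr)))

theorem freeRows_of_west_last_eq_false {T : TypeBTableau (n + 1)}
    (h : T.west (Fin.last n) = false) :
    T.freeRows = insert (Fin.last n) (T.init.freeRows.map Fin.castSuccEmb) := by
  ext r
  cases r using Fin.lastCases with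
  | last => simp [isFree_last_iff, h]
  | cast r => simp [isFree_castSucc_iff, lastColumn_eq_empty h]

theorem freeRows_of_west_last_eq_true {T : TypeBTableau (n + 1)}
    (h : T.west (Fin.last n) = true) :
    T.freeRows = T.lastColumn ∪
      {a ∈ T.init.freeRows.map Fin.castSuccEmb | ∀ b ∈ T.lastColumn, RowAbove T.west a b} := by
  ext r
  cases r using Fin.lastCases with
  | last => simp [isFree_last_iff, h]
  | cast r =>
    have hmem : r.castSucc ∈ T.init.freeRows.map Fin.castSuccEmb ↔ T.init.IsFree r := by simp
    rw [mem_freeRows, isFree_castSucc_iff, mem_union, mem_filter, hmem]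
    by_cases hr : r.castSucc ∈ T.lastColumn
    · simp [hr, isFree_init_of_castSucc_mem_lastColumn hr]
    · simp only [hr, false_or]
      refine and_congr_right fun _ => forall₂_congr fun b hb => ⟨fun h => ?_, RowAbove.asymm⟩
      have hne : r.castSucc ≠ b := fun hrb => hr (hrb ▸ hb)
      exact (rowAbove_or_rowAbove_of_ne _ hne).resolve_right h

theorem card_freeRows_of_west_last_eq_false {T : TypeBTableau (n + 1)}
    (h : T.west (Fin.last n) = false) : #T.freeRows = #T.init.freeRows + 1 := by
  rw [freeRows_of_west_last_eq_false h, card_insert_of_notMem (by simp), card_map]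

theorem card_freeRows_of_west_last_eq_true {T : TypeBTableau (n + 1)}
    (h : T.west (Fin.last n) = true) :
    #T.freeRows = #T.lastColumn +
      #{a ∈ T.init.freeRows.map Fin.castSuccEmb | ∀ b ∈ T.lastColumn, RowAbove T.west a b} := by
  rw [freeRows_of_west_last_eq_true h, card_union_of_disjoint]
  exact disjoint_left.mpr fun a ha ha' => rowAbove_irrefl _ a ((mem_filter.mp ha').2 a ha)

theorem isFree_of_castSucc_mem {T : TypeBTableau n} {B : Finset (Fin (n + 1))}
    (hB : B ⊆ insert (Fin.last n) (T.freeRows.map Fin.castSuccEmb)) {r : Fin n}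
    (hr : r.castSucc ∈ B) : T.IsFree r := by
  simpa [Fin.castSucc_ne_last] using hB hr

/-- Appends a south step if `b = false`, otherwise a west step whose column, the new leftmost
one, has its `1`s in the rows `B`. -/
def snoc (T : TypeBTableau n) (b : Bool) (B : Finset (Fin (n + 1)))
    (hB : B ⊆ insert (Fin.last n) (T.freeRows.map Fin.castSuccEmb)) (hb : B.Nonempty ↔ b = true) :
    TypeBTableau (n + 1) where
  west := Fin.snoc T.west b
  filling r c := Fin.lastCases (motive := fun _ => Bool) (decide (r ∈ B))
    (fun c => Fin.lastCases false (fun r => T.filling r c) r) c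
  support r c h := by
    cases c using Fin.lastCases with
    | last => exact hasCell_last.mpr (by simpa using hb.mp ⟨r, by simpa using h⟩)
    | cast c =>
      cases r using Fin.lastCases with
      | last => simp at h
      | cast r =>
        rw [← HasCell, hasCell_castSucc, Fin.init_snoc]
        exact T.support r c (by simpa using h)
  col_one c hc := by
    cases c using Fin.lastCases with
    | last =>
      obtain ⟨r, hr⟩ := hb.mpr (by simpa using hc)
      exact ⟨r, by simpa using hr⟩
    | cast c =>
      obtain ⟨r, hr⟩ := T.col_one c (by simpa using hc)
      exact ⟨r.castSucc, by simpa using hr⟩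
  no_bad_zero r c hcell h0 := by
    rintro ⟨⟨r', habv, h1⟩, c', hlt, h2⟩
    cases c using Fin.lastCases with
    | last => exact absurd hlt (not_lt.mpr c'.le_last)
    | cast c =>
      cases r using Fin.lastCases with
      | last => exact not_hasCell_last_castSucc hcell
      | cast r =>
        cases r' using Fin.lastCases with
        | last => simp at h1
        | cast r' =>
          have hcell : HasCell T.west r c := by simpa using hasCell_castSucc.mp hcell
          have habv : RowAbove T.west r' r := by simpa using rowAbove_castSucc.mp habv
          replace h0 : T.filling r c = false := by simpa using h0
          replace h1 : T.filling r' c = true := by simpa using h1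
          cases c' using Fin.lastCases with
          | last =>
            exact (isFree_of_castSucc_mem hB (by simpa using h2)).2 ⟨c, hcell, h0, r', habv, h1⟩
          | cast c' => exact T.no_bad_zero r c hcell h0 ⟨⟨r', habv, h1⟩, c', hlt, by simpa using h2⟩
  diag_zero j hj h0 c := by
    cases j using Fin.lastCases with
    | last =>
      cases c using Fin.lastCases with
      | last => exact h0
      | cast c => simp
    | cast j =>
      replace hj : T.west j = true := by simpa using hj
      replace h0 : T.filling j j = false := by simpa using h0
      cases c using Fin.lastCases with
      | last =>
        simpa using fun hjB => by simp [(isFree_of_castSucc_mem hB hjB).1 hj] at h0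
      | cast c => simpa using T.diag_zero j hj h0 c

section Snoc

variable (T : TypeBTableau n) (b : Bool) (B : Finset (Fin (n + 1)))
  (hB : B ⊆ insert (Fin.last n) (T.freeRows.map Fin.castSuccEmb)) (hb : B.Nonempty ↔ b = true)

@[simp] theorem init_snoc : (T.snoc b B hB hb).init = T :=
  ext_west_filling (by simp [snoc]) (funext₂ fun r c => by simp [snoc])

@[simp] theorem snoc_west_last : (T.snoc b B hB hb).west (Fin.last n) = b :=
  Fin.snoc_last (α := fun _ => Bool) b T.west

@[simp] theorem lastColumn_snoc : (T.snoc b B hB hb).lastColumn = B := by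
  ext r; simp [snoc]

end Snoc

theorem west_eq_snoc (T : TypeBTableau (n + 1)) :
    T.west = Fin.snoc T.init.west (T.west (Fin.last n)) :=
  (Fin.snoc_init_self _).symm

theorem filter_init_eq_and_west_last_eq_false (T : TypeBTableau n) :
    ({T' | T'.init = T ∧ T'.west (Fin.last n) = false} : Finset (TypeBTableau (n + 1))) =
      {T.snoc false ∅ (empty_subset _) (by simp)} := by
  ext T'
  simp only [mem_filter, mem_univ, true_and, mem_singleton]
  constructor
  · rintro ⟨h, hw⟩
    exact ext_of_init (by simp [h]) (by simp [hw]) (by simp [lastColumn_eq_empty hw])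
  · rintro rfl
    simp

variable {R : Type*} [CommSemiring R]

theorem sum_filter_init_eq_and_west_last_pow_card_freeRows (T : TypeBTableau n) (x : R) :
    ∑ T' : TypeBTableau (n + 1) with T'.init = T ∧ T'.west (Fin.last n) = true,
        x ^ #T'.freeRows =
      ∑ B ∈ (insert (Fin.last n) (T.freeRows.map Fin.castSuccEmb)).powerset with B.Nonempty,
        x ^ (#B + #{a ∈ T.freeRows.map Fin.castSuccEmb |
          ∀ b ∈ B, RowAbove (Fin.snoc T.west true) a b}) := by
  refine sum_nbij lastColumn (fun T' hT' => ?_) (fun T₁ hT₁ T₂ hT₂ hc => ?_) (fun B hB => ?_)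
    (fun T' hT' => ?_)
  · obtain ⟨rfl, hw⟩ := (mem_filter.mp hT').2
    exact mem_filter.mpr ⟨mem_powerset.mpr T'.lastColumn_subset, lastColumn_nonempty hw⟩
  · obtain ⟨h₁, hw₁⟩ := (mem_filter.mp hT₁).2
    obtain ⟨h₂, hw₂⟩ := (mem_filter.mp hT₂).2
    exact ext_of_init (h₁.trans h₂.symm) (hw₁.trans hw₂.symm) hc
  · obtain ⟨hB, hne⟩ := mem_filter.mp hB
    exact ⟨T.snoc true B (mem_powerset.mp hB) (iff_of_true hne rfl), by simp, by simp⟩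
  · obtain ⟨rfl, hw⟩ := (mem_filter.mp hT').2
    rw [card_freeRows_of_west_last_eq_true hw, west_eq_snoc T', hw]

theorem sum_filter_init_eq_pow_card_freeRows (T : TypeBTableau n) (x : R) :
    ∑ T' : TypeBTableau (n + 1) with T'.init = T, x ^ #T'.freeRows =
      2 * x * (1 + x) ^ #T.freeRows := by
  set S := T.freeRows.map Fin.castSuccEmb
  rw [← sum_fiberwise _ (fun T' => T'.west (Fin.last n)), Fintype.sum_bool, filter_filter,
    filter_filter, sum_filter_init_eq_and_west_last_pow_card_freeRows,
    filter_init_eq_and_west_last_eq_false, sum_singleton,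
    card_freeRows_of_west_last_eq_false (by simp), init_snoc,
    sum_powerset_insert_filter_nonempty (by simp [Fin.castSucc_ne_last])]
  -- a `1` in the new diagonal cell, which is the top row, leaves no old row free
  have hnew : ∀ B ∈ S.powerset, x ^ (#(insert (Fin.last n) B) +
      #{a ∈ S | ∀ b ∈ insert (Fin.last n) B, RowAbove (Fin.snoc T.west true) a b}) =
        x ^ (#B + 1) := by
    intro B hB
    rw [card_insert_of_notMem, filter_eq_empty_iff.mpr, card_empty, add_zero]
    · exact fun a _ ha => not_rowAbove_last (by simp) a (ha _ (mem_insert_self _ _))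
    · exact fun h => by simpa [S, Fin.castSucc_ne_last] using mem_powerset.mp hB h
  have key := pow_card_succ_add_sum_powerset_pow_card_add_card_lt (rowPos (Fin.snoc T.west true))
    x (rowPos_injective _).injOn (s := S)
  simp only [← rowAbove_iff_rowPos_lt, S, card_map] at key
  rw [sum_congr rfl hnew, sum_powerset_pow_card_succ, card_map, add_right_comm,
    add_comm _ (x ^ _), key]
  ring

theorem sum_filter_init {M : Type*} [AddCommMonoid M] (p : TypeBTableau n → Prop)
    [DecidablePred p] (f : TypeBTableau (n + 1) → M) :
    ∑ T' with p T'.init, f T' = ∑ T with p T, ∑ T' with T'.init = T, f T' := by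
  rw [← sum_fiberwise_of_maps_to (g := init) (t := {T | p T}) (by simp)]
  refine sum_congr rfl fun T hT => ?_
  rw [filter_filter]
  exact sum_congr (filter_congr fun T' _ => ⟨And.right, fun h => ⟨h ▸ (mem_filter.mp hT).2, h⟩⟩)
    fun _ _ => rfl

noncomputable def genFun (n x : ℕ) : ℕ := ∑ T : TypeBTableau n, x ^ #T.freeRows

noncomputable def southGenFun (i : Fin n) (x : ℕ) : ℕ :=
  ∑ T : TypeBTableau n with T.west i = false, x ^ #T.freeRows

theorem genFun_succ (n x : ℕ) : genFun (n + 1) x = 2 * x * genFun n (x + 1) := by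
  rw [genFun, ← sum_fiberwise _ init, genFun, mul_sum]
  exact sum_congr rfl fun T _ => by rw [sum_filter_init_eq_pow_card_freeRows, add_comm 1 x]

theorem southGenFun_castSucc (i : Fin n) (x : ℕ) :
    southGenFun i.castSucc x = 2 * x * southGenFun i (x + 1) := by
  change ∑ T' : TypeBTableau (n + 1) with T'.init.west i = false, _ = _
  rw [sum_filter_init (fun T => T.west i = false), southGenFun, mul_sum]
  exact sum_congr rfl fun T _ => by rw [sum_filter_init_eq_pow_card_freeRows, add_comm 1 x]

theorem southGenFun_last (n x : ℕ) : southGenFun (Fin.last n) x = x * genFun n x := by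
  rw [southGenFun, ← sum_fiberwise _ init, genFun, mul_sum]
  refine sum_congr rfl fun T _ => ?_
  rw [filter_comm, filter_filter, filter_init_eq_and_west_last_eq_false, sum_singleton,
    card_freeRows_of_west_last_eq_false (by simp), init_snoc, pow_succ']

theorem add_mul_genFun (n x : ℕ) : (x + n) * genFun n x = x * genFun n (x + 1) := by
  induction n generalizing x with
  | zero => simp [genFun, eq_empty_of_isEmpty]
  | succ n ih =>
    rw [genFun_succ, genFun_succ]
    calc _ = 2 * x * ((x + 1 + n) * genFun n (x + 1)) := by ring
      _ = _ := by rw [ih]; ring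

theorem two_mul_southGenFun_last (n x : ℕ) :
    2 * (x + n) * southGenFun (Fin.last n) x = x * genFun (n + 1) x := by
  rw [southGenFun_last, genFun_succ]
  calc _ = 2 * x * ((x + n) * genFun n x) := by ring
    _ = _ := by rw [add_mul_genFun]; ring

theorem two_mul_southGenFun (n : ℕ) (i : Fin (n + 1)) (x : ℕ) :
    2 * (x + n) * southGenFun i x = (x + n - i) * genFun (n + 1) x := by
  induction n generalizing x with
  | zero =>
    cases i using Fin.lastCases with
    | last => simpa using two_mul_southGenFun_last 0 x
    | cast i => exact i.elim0
  | succ n ih =>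
    cases i using Fin.lastCases with
    | last => simpa using two_mul_southGenFun_last (n + 1) x
    | cast i =>
      have hx : x + 1 + n - i = x + (n + 1) - i := by omega
      rw [southGenFun_castSucc, genFun_succ (n + 1), Fin.val_castSucc]
      calc _ = 2 * x * (2 * (x + 1 + n) * southGenFun i (x + 1)) := by ring
        _ = _ := by rw [ih, hx]; ring

end TypeBTableau

/-- The number of type-B permutation tableaux of size `n` whose `k`-th border step
is a south step equals `((n - k + 1) / (2n)) · |B_n|`; i.e. the probability that
the `k`-th step of a uniformly random type-B permutation tableau of size `n` is a
south step is `(1/2)(1 - (k-1)/n)`. -/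
theorem expected_south_step (n k : ℕ) (hk : 1 ≤ k) (hkn : k ≤ n) :
    ((Finset.univ.filter (fun T : TypeBTableau n =>
        T.west ⟨k - 1, by omega⟩ = false)).card : ℝ) =
      ((n : ℝ) - (k : ℝ) + 1) / (2 * (n : ℝ)) * (Fintype.card (TypeBTableau n) : ℝ) := by
  obtain ⟨m, rfl⟩ : ∃ m, n = m + 1 := ⟨n - 1, by omega⟩
  have key := TypeBTableau.two_mul_southGenFun m ⟨k - 1, by omega⟩ 1
  simp only [TypeBTableau.southGenFun, TypeBTableau.genFun, one_pow, sum_const, smul_eq_mul,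
    mul_one] at key
  have hsub : ((1 + m - (k - 1) : ℕ) : ℝ) = (m + 1 : ℝ) - k + 1 := by
    rw [Nat.cast_sub (by omega), Nat.cast_sub hk]
    push_cast
    ring
  have hR := congrArg (Nat.cast : ℕ → ℝ) key
  simp only [Nat.cast_mul, Nat.cast_ofNat, Nat.cast_add, Nat.cast_one, hsub, card_univ] at hR
  rw [div_mul_eq_mul_div, eq_div_iff (by positivity)]
  push_cast
  linear_combination hR
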